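/- Discrete Hermite recursion: for all N ≥ 1 and t ∈ [0,1], (B^{H,n}_t)^{⋄ₙ(N+1)} = B^{H,n}_t·(B^{H,n}_t)^{⋄ₙN} − N·E[(B^{H,n}_t)²]·(B^{H,n}_t)^{⋄ₙ(N−1)} + R(B^{H,n}_t,N), where R(B^{H,n}_t,N) = N! Σ_{C⊆{1,…,⌊nt⌋},|C|=N−1} b^n_{t,C} Ξ^n_C Σ_{i∈C}(b^n_{t,i})², and the remainder satisfies E[R(B^{H,n}_t,N)²] ≤ 16 c_H⁴ N! N³ n^{−(4−4H)}. -/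

import Mathlib

open MeasureTheory ProbabilityTheory Finset
open scoped ENNReal

/-- The distribution of a symmetric ±1 Bernoulli random variable. -/
noncomputable def bernPM : Measure ℝ :=
  (1 / 2 : ℝ≥0∞) • Measure.dirac 1 + (1 / 2 : ℝ≥0∞) • Measure.dirac (-1)

/-- The Molchan–Golosov constant `c_H`. -/
noncomputable def cH (H : ℝ) : ℝ :=
  Real.sqrt (2 * H * Real.Gamma (3 / 2 - H) / (Real.Gamma (H + 1 / 2) * Real.Gamma (2 - 2 * H)))

/-- The Walsh monomial `Ξ_A = ∏_{i∈A} ξ_i`. -/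
def XiW {Ω : Type*} {n : ℕ} (ξ : Fin n → Ω → ℝ) (A : Finset (Fin n)) (ω : Ω) : ℝ :=
  ∏ i ∈ A, ξ i ω

/-- The discrete Wick product on Walsh coefficients. -/
def wickProd {n : ℕ} (x y : Finset (Fin n) → ℝ) : Finset (Fin n) → ℝ :=
  fun C => ∑ A : Finset (Fin n), ∑ B : Finset (Fin n),
    if A ∪ B = C ∧ Disjoint A B then x A * y B else 0

/-- Iterated discrete Wick powers on Walsh coefficients. -/
def wickPowC {n : ℕ} (x : Finset (Fin n) → ℝ) : ℕ → Finset (Fin n) → ℝ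
  | 0 => fun C => if C = ∅ then 1 else 0
  | k + 1 => wickProd (wickPowC x k) x

/-- Walsh coefficients of the walk `Σ_i b_i ξ_i`. -/
def singC {n : ℕ} (b : Fin n → ℝ) : Finset (Fin n) → ℝ :=
  fun C => ∑ i : Fin n, if C = {i} then b i else 0

/-- The random walk `B^{H,n}_t(ω) = Σ_i b_i ξ_i(ω)`. -/
def walkRV {Ω : Type*} {n : ℕ} (ξ : Fin n → Ω → ℝ) (b : Fin n → ℝ) (ω : Ω) : ℝ :=
  ∑ i : Fin n, b i * ξ i ω

/-- The `k`-th discrete Wick power of the walk, as a random variable. -/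
def wickPowRV {Ω : Type*} {n : ℕ} (ξ : Fin n → Ω → ℝ) (b : Fin n → ℝ) (k : ℕ) (ω : Ω) : ℝ :=
  ∑ C : Finset (Fin n), wickPowC (singC b) k C * XiW ξ C ω

/-!
In the Walsh basis the Wick powers are `(B)^{⋄k} = k! ∑_{|C| = k} b_C Ξ_C`. Since `ξ_i² = 1`,
multiplying `Ξ_C` by `ξ_i` removes `i` from `C` when `i ∈ C` and adds it otherwise, so
`B · B^{⋄N}` splits into a part of order `N + 1`, which is `B^{⋄(N+1)}`, and a part of order
`N - 1` whose coefficients carry the factor `∑_{i ∉ D} b_i² = E[B²] - ∑_{i ∈ D} b_i²`; this gives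
the Itô correction and the remainder. The `Ξ_C` are orthonormal, so
`E[R²] = (N!)² ∑_{|C| = N-1} b_C² (∑_{i ∈ C} b_i²)²`, and `|b_i| ≤ β` together with
`(N-1)! e_{N-1}(b²) ≤ (∑ b_i²)^{N-1} ≤ 1` bounds it by `N! N³ β⁴`.
-/

section Combinatorics

variable {α : Type*} [DecidableEq α]

theorem union_singleton_eq_and_disjoint_iff (i : α) (A C : Finset α) :
    (A ∪ {i} = C ∧ Disjoint A {i}) ↔ (i ∈ C ∧ A = C.erase i) := by
  rw [disjoint_singleton_right]
  constructor
  · rintro ⟨rfl, hi⟩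
    simp [erase_eq_of_notMem hi]
  · rintro ⟨hi, rfl⟩
    simp [insert_erase hi]

variable [Fintype α]

theorem sum_card_succ_sum_mem {M : Type*} [AddCommMonoid M] (k : ℕ) (F : Finset α → α → M) :
    ∑ C ∈ univ.filter (fun C : Finset α => C.card = k + 1), ∑ i ∈ C, F C i
      = ∑ D ∈ univ.filter (fun D : Finset α => D.card = k), ∑ i ∈ Dᶜ, F (insert i D) i := by
  rw [sum_sigma', sum_sigma']
  refine sum_bij' (fun p _ => ⟨p.1.erase p.2, p.2⟩) (fun q _ => ⟨insert q.2 q.1, q.2⟩)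
    ?_ ?_ ?_ ?_ ?_ <;> rintro ⟨C, i⟩ h <;>
    simp only [mem_sigma, mem_filter, mem_univ, true_and, mem_compl] at h ⊢
  · exact ⟨by rw [card_erase_of_mem h.2, h.1]; rfl, notMem_erase _ _⟩
  · exact ⟨by rw [card_insert_of_notMem h.2, h.1], mem_insert_self _ _⟩
  · simp [insert_erase h.2]
  · simp [erase_insert h.2]
  · rw [insert_erase h.2]

theorem factorial_mul_esymm_le_sum_pow (x : α → ℝ) (hx : ∀ i, 0 ≤ x i) :
    ∀ k : ℕ, (k.factorial : ℝ) * ∑ C ∈ univ.filter (fun C : Finset α => C.card = k), ∏ i ∈ C, x i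
      ≤ (∑ i, x i) ^ k
  | 0 => by simp [filter_eq', card_eq_zero]
  | k + 1 => by
    have hcount : ((k : ℝ) + 1) * ∑ C ∈ univ.filter (fun C : Finset α => C.card = k + 1),
        ∏ i ∈ C, x i
        = ∑ D ∈ univ.filter (fun D : Finset α => D.card = k), (∑ i ∈ Dᶜ, x i) * ∏ j ∈ D, x j := by
      calc _ = ∑ C ∈ univ.filter (fun C : Finset α => C.card = k + 1), ∑ i ∈ C, ∏ j ∈ C, x j := by
            rw [mul_sum]
            exact sum_congr rfl fun C hC => by
              rw [sum_const, (mem_filter.1 hC).2, nsmul_eq_mul]; push_cast; ring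
        _ = _ := by
          rw [sum_card_succ_sum_mem]
          exact sum_congr rfl fun D _ => by
            rw [sum_mul]; exact sum_congr rfl fun i hi => prod_insert (mem_compl.1 hi)
    have hsum : 0 ≤ ∑ i, x i := sum_nonneg fun i _ => hx i
    calc ((k + 1).factorial : ℝ) * ∑ C ∈ univ.filter (fun C : Finset α => C.card = k + 1),
          ∏ i ∈ C, x i
        = k.factorial * ∑ D ∈ univ.filter (fun D : Finset α => D.card = k),
            (∑ i ∈ Dᶜ, x i) * ∏ j ∈ D, x j := by
          rw [← hcount]; push_cast [Nat.factorial_succ]; ring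
      _ ≤ k.factorial * ∑ D ∈ univ.filter (fun D : Finset α => D.card = k),
            (∑ i, x i) * ∏ j ∈ D, x j := by
          gcongr with D
          · exact prod_nonneg fun j _ => hx j
          · exact fun i _ _ => hx i
          · exact subset_univ _
      _ = (∑ i, x i) * (k.factorial * ∑ D ∈ univ.filter (fun D : Finset α => D.card = k),
            ∏ j ∈ D, x j) := by rw [← mul_sum]; ring
      _ ≤ (∑ i, x i) * (∑ i, x i) ^ k := by gcongr; exact factorial_mul_esymm_le_sum_pow x hx k
      _ = (∑ i, x i) ^ (k + 1) := by ring

end Combinatorics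

section Walsh

variable {Ω : Type*} {n : ℕ} {ξ : Fin n → Ω → ℝ}

theorem XiW_mul_XiW (hξ : ∀ i ω, ξ i ω ^ 2 = 1) (A B : Finset (Fin n)) (ω : Ω) :
    XiW ξ A ω * XiW ξ B ω = XiW ξ (symmDiff A B) ω := by
  have hinter : (∏ i ∈ A ∩ B, ξ i ω) ^ 2 = 1 := by
    rw [← prod_pow]; exact prod_eq_one fun i _ => hξ i ω
  have hunion : A ∪ B = symmDiff A B ∪ A ∩ B := (symmDiff_sup_inf A B).symm
  have hdisj : Disjoint (symmDiff A B) (A ∩ B) := disjoint_symmDiff_inf A B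
  unfold XiW
  rw [← prod_union_inter, hunion, prod_union hdisj]
  linear_combination (∏ i ∈ symmDiff A B, ξ i ω) * hinter

theorem xi_mul_XiW (hξ : ∀ i ω, ξ i ω ^ 2 = 1) (i : Fin n) (C : Finset (Fin n)) (ω : Ω) :
    ξ i ω * XiW ξ C ω = if i ∈ C then XiW ξ (C.erase i) ω else XiW ξ (insert i C) ω := by
  unfold XiW
  split_ifs with h
  · rw [← mul_prod_erase C _ h, ← mul_assoc, ← sq, hξ, one_mul]
  · rw [prod_insert h]

theorem abs_XiW (hξ : ∀ i ω, ξ i ω ^ 2 = 1) (A : Finset (Fin n)) (ω : Ω) :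
    |XiW ξ A ω| = 1 := by
  rw [XiW, abs_prod]
  exact prod_eq_one fun i _ =>
    (pow_eq_one_iff_of_nonneg (abs_nonneg _) two_ne_zero).1 (by rw [sq_abs, hξ])

end Walsh

section WickCoefficients

variable {n : ℕ}

theorem sum_mul_singC (f : Finset (Fin n) → ℝ) (b : Fin n → ℝ) :
    ∑ B, f B * singC b B = ∑ i, f {i} * b i := by
  simp only [singC, mul_sum, mul_ite, mul_zero]
  rw [sum_comm]
  simp

theorem wickProd_singC (x : Finset (Fin n) → ℝ) (b : Fin n → ℝ) (C : Finset (Fin n)) :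
    wickProd x (singC b) C = ∑ i ∈ C, x (C.erase i) * b i := by
  calc wickProd x (singC b) C
      = ∑ A, ∑ B, (if A ∪ B = C ∧ Disjoint A B then x A else 0) * singC b B := by
        simp only [wickProd, ite_mul, zero_mul]
    _ = ∑ i, ∑ A, (if i ∈ C ∧ A = C.erase i then x A else 0) * b i := by
        simp only [sum_mul_singC, union_singleton_eq_and_disjoint_iff]
        exact sum_comm
    _ = ∑ i ∈ C, x (C.erase i) * b i := by
        simp [ite_and, sum_ite_mem]

theorem wickPowC_singC (b : Fin n → ℝ) : ∀ (k : ℕ) (C : Finset (Fin n)),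
    wickPowC (singC b) k C = if C.card = k then (k.factorial : ℝ) * ∏ i ∈ C, b i else 0
  | 0, C => by by_cases h : C = ∅ <;> simp [wickPowC, h, card_eq_zero]
  | k + 1, C => by
    rw [wickPowC, wickProd_singC]
    simp_rw [wickPowC_singC b k]
    split_ifs with hC
    · calc ∑ i ∈ C, (if (C.erase i).card = k then (k.factorial : ℝ) * ∏ j ∈ C.erase i, b j
            else 0) * b i
          = ∑ _i ∈ C, (k.factorial : ℝ) * ∏ j ∈ C, b j := sum_congr rfl fun i hi => by
            rw [if_pos (by rw [card_erase_of_mem hi, hC]; rfl), mul_assoc, prod_erase_mul _ _ hi]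
        _ = ((k + 1).factorial : ℝ) * ∏ i ∈ C, b i := by
            rw [sum_const, hC, nsmul_eq_mul]; push_cast [Nat.factorial_succ]; ring
    · refine sum_eq_zero fun i hi => ?_
      have : 1 ≤ C.card := card_pos.2 ⟨i, hi⟩
      rw [if_neg (by rw [card_erase_of_mem hi]; omega), zero_mul]

end WickCoefficients

def homChaos {Ω : Type*} {n : ℕ} (ξ : Fin n → Ω → ℝ) (b : Fin n → ℝ) (k : ℕ) (ω : Ω) : ℝ :=
  ∑ C ∈ univ.filter (fun C : Finset (Fin n) => C.card = k), (∏ i ∈ C, b i) * XiW ξ C ω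

section Chaos

variable {Ω : Type*} {n : ℕ} {ξ : Fin n → Ω → ℝ}

theorem wickPowRV_eq_factorial_mul_homChaos (b : Fin n → ℝ) (k : ℕ) (ω : Ω) :
    wickPowRV ξ b k ω = k.factorial * homChaos ξ b k ω := by
  simp only [wickPowRV, homChaos, wickPowC_singC, ite_mul, zero_mul, ← sum_filter, mul_sum,
    mul_assoc]

theorem walkRV_mul_homChaos_succ (hξ : ∀ i ω, ξ i ω ^ 2 = 1) (b : Fin n → ℝ) (M : ℕ) (ω : Ω) :
    walkRV ξ b ω * homChaos ξ b (M + 1) ω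
      = (M + 2) * homChaos ξ b (M + 2) ω + (∑ i, b i ^ 2) * homChaos ξ b M ω
        - ∑ C ∈ univ.filter (fun C : Finset (Fin n) => C.card = M),
            (∏ i ∈ C, b i) * XiW ξ C ω * ∑ i ∈ C, b i ^ 2 := by
  have hsplit : walkRV ξ b ω * homChaos ξ b (M + 1) ω
      = ∑ C ∈ univ.filter (fun C : Finset (Fin n) => C.card = M + 1),
          ∑ i ∈ C, b i * (∏ j ∈ C, b j) * XiW ξ (C.erase i) ω
        + ∑ C ∈ univ.filter (fun C : Finset (Fin n) => C.card = M + 1),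
          ∑ i ∈ Cᶜ, b i * (∏ j ∈ C, b j) * XiW ξ (insert i C) ω := by
    rw [walkRV, homChaos, mul_sum, ← sum_add_distrib]
    refine sum_congr rfl fun C _ => ?_
    rw [sum_mul, ← sum_add_sum_compl C]
    congr 1 <;> refine sum_congr rfl fun i hi => ?_
    · rw [mul_mul_mul_comm, xi_mul_XiW hξ, if_pos hi]
    · rw [mul_mul_mul_comm, xi_mul_XiW hξ, if_neg (mem_compl.1 hi)]
  have hlower : ∑ C ∈ univ.filter (fun C : Finset (Fin n) => C.card = M + 1),
        ∑ i ∈ C, b i * (∏ j ∈ C, b j) * XiW ξ (C.erase i) ω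
      = ∑ D ∈ univ.filter (fun D : Finset (Fin n) => D.card = M),
          ((∑ i, b i ^ 2) - ∑ i ∈ D, b i ^ 2) * ((∏ i ∈ D, b i) * XiW ξ D ω) := by
    rw [sum_card_succ_sum_mem]
    refine sum_congr rfl fun D _ => ?_
    rw [← sum_compl_add_sum D, add_sub_cancel_right, sum_mul]
    refine sum_congr rfl fun i hi => ?_
    rw [prod_insert (mem_compl.1 hi), erase_insert (mem_compl.1 hi)]
    ring
  have hupper : ∑ C ∈ univ.filter (fun C : Finset (Fin n) => C.card = M + 1),
        ∑ i ∈ Cᶜ, b i * (∏ j ∈ C, b j) * XiW ξ (insert i C) ω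
      = (M + 2) * homChaos ξ b (M + 2) ω := by
    have hins : ∀ C : Finset (Fin n), ∀ i ∈ Cᶜ,
        b i * (∏ j ∈ C, b j) * XiW ξ (insert i C) ω
          = (∏ j ∈ insert i C, b j) * XiW ξ (insert i C) ω := fun C i hi => by
      rw [prod_insert (mem_compl.1 hi)]
    simp_rw [sum_congr rfl (hins _)]
    rw [← sum_card_succ_sum_mem (M + 1) fun E _ => (∏ j ∈ E, b j) * XiW ξ E ω, homChaos, mul_sum]
    refine sum_congr rfl fun E hE => ?_
    rw [sum_const, (mem_filter.1 hE).2, nsmul_eq_mul]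
    push_cast
    ring
  have hcorr : ∑ D ∈ univ.filter (fun D : Finset (Fin n) => D.card = M),
        ((∑ i, b i ^ 2) - ∑ i ∈ D, b i ^ 2) * ((∏ i ∈ D, b i) * XiW ξ D ω)
      = (∑ i, b i ^ 2) * homChaos ξ b M ω
        - ∑ C ∈ univ.filter (fun C : Finset (Fin n) => C.card = M),
            (∏ i ∈ C, b i) * XiW ξ C ω * ∑ i ∈ C, b i ^ 2 := by
    rw [homChaos, mul_sum, ← sum_sub_distrib]
    exact sum_congr rfl fun D _ => by ring
  rw [hsplit, hlower, hupper, hcorr]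
  ring

end Chaos

theorem integral_id_bernPM : ∫ x, x ∂bernPM = 0 := by
  have hdirac : ∀ a : ℝ, Integrable (fun x : ℝ => x) (Measure.dirac a) := fun a =>
    (integrable_const a).congr (ae_eq_dirac (fun x : ℝ => x)).symm
  rw [bernPM, integral_add_measure ((hdirac 1).smul_measure (by norm_num))
    ((hdirac (-1)).smul_measure (by norm_num)), integral_smul_measure, integral_smul_measure,
    integral_dirac, integral_dirac]
  norm_num

section Moments

variable {Ω : Type*} [MeasurableSpace Ω] {P : Measure Ω} {n : ℕ} {ξ : Fin n → Ω → ℝ}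

theorem integrable_XiW [IsFiniteMeasure P] (hmeas : ∀ i, Measurable (ξ i))
    (hξ : ∀ i ω, ξ i ω ^ 2 = 1) (A : Finset (Fin n)) : Integrable (XiW ξ A) P :=
  (integrable_const (1 : ℝ)).mono'
    (Finset.measurable_prod A fun i _ => hmeas i).aestronglyMeasurable
    (ae_of_all _ fun ω => (abs_XiW hξ A ω).le)

theorem integral_XiW (hmeas : ∀ i, Measurable (ξ i))
    (hindep : iIndepFun ξ P) (hmean : ∀ i, ∫ ω, ξ i ω ∂P = 0) (A : Finset (Fin n)) :
    ∫ ω, XiW ξ A ω ∂P = if A = ∅ then 1 else 0 := by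
  have := hindep.isProbabilityMeasure
  let f : Fin n → ℝ → ℝ := fun i => if i ∈ A then id else fun _ => 1
  have hf : ∀ i x, f i x = if i ∈ A then x else 1 := fun i x => by
    simp only [f]; split_ifs <;> rfl
  have hprod := hindep.integral_fun_prod_comp (f := f) (fun i => (hmeas i).aemeasurable)
    fun i => by simp only [f]; split_ifs <;> fun_prop
  have hfactor : ∀ i, ∫ ω, f i (ξ i ω) ∂P = if i ∈ A then 0 else 1 := fun i => by
    simp only [f]; split_ifs <;> simp [hmean]
  rw [prod_congr rfl fun i _ => hfactor i] at hprod
  simp only [hf, prod_ite_mem, univ_inter] at hprod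
  simp only [XiW, hprod, prod_const, zero_pow_eq, card_eq_zero]

theorem integral_XiW_mul_XiW (hmeas : ∀ i, Measurable (ξ i))
    (hindep : iIndepFun ξ P) (hmean : ∀ i, ∫ ω, ξ i ω ∂P = 0) (hξ : ∀ i ω, ξ i ω ^ 2 = 1)
    (A B : Finset (Fin n)) :
    ∫ ω, XiW ξ A ω * XiW ξ B ω ∂P = if A = B then 1 else 0 := by
  simp_rw [XiW_mul_XiW hξ, integral_XiW hmeas hindep hmean, ← bot_eq_empty, symmDiff_eq_bot]

theorem integral_sum_mul_XiW_sq (hmeas : ∀ i, Measurable (ξ i))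
    (hindep : iIndepFun ξ P) (hmean : ∀ i, ∫ ω, ξ i ω ∂P = 0) (hξ : ∀ i ω, ξ i ω ^ 2 = 1)
    {ι : Type*} (s : Finset ι) (c : ι → ℝ) {A : ι → Finset (Fin n)} (hA : Function.Injective A) :
    ∫ ω, (∑ j ∈ s, c j * XiW ξ (A j) ω) ^ 2 ∂P = ∑ j ∈ s, c j ^ 2 := by
  classical
  have := hindep.isProbabilityMeasure
  have hint : ∀ j k, Integrable (fun ω => c j * c k * (XiW ξ (A j) ω * XiW ξ (A k) ω)) P :=
    fun j k => by
      simp_rw [XiW_mul_XiW hξ]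
      exact (integrable_XiW hmeas hξ _).const_mul _
  calc ∫ ω, (∑ j ∈ s, c j * XiW ξ (A j) ω) ^ 2 ∂P
      = ∫ ω, ∑ j ∈ s, ∑ k ∈ s, c j * c k * (XiW ξ (A j) ω * XiW ξ (A k) ω) ∂P := by
        simp_rw [sq, sum_mul_sum, mul_mul_mul_comm]
    _ = ∑ j ∈ s, ∑ k ∈ s, c j * c k * (if j = k then 1 else 0) := by
        rw [integral_finsetSum _ fun j _ => integrable_finsetSum _ fun k _ => hint j k]
        refine sum_congr rfl fun j _ => ?_
        rw [integral_finsetSum _ fun k _ => hint j k]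
        simp_rw [integral_const_mul, integral_XiW_mul_XiW hmeas hindep hmean hξ, hA.eq_iff]
    _ = ∑ j ∈ s, c j ^ 2 := by simp [sq]

theorem integral_eq_zero_of_map_eq_bernPM {X : Ω → ℝ} (hX : Measurable X)
    (hmap : P.map X = bernPM) : ∫ ω, X ω ∂P = 0 := by
  rw [← integral_id_bernPM, ← hmap,
    integral_map (f := fun x => x) hX.aemeasurable aestronglyMeasurable_id]

theorem integral_walkRV_sq (hmeas : ∀ i, Measurable (ξ i)) (hindep : iIndepFun ξ P)
    (hmean : ∀ i, ∫ ω, ξ i ω ∂P = 0) (hξ : ∀ i ω, ξ i ω ^ 2 = 1) (b : Fin n → ℝ) :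
    ∫ ω, walkRV ξ b ω ^ 2 ∂P = ∑ i, b i ^ 2 := by
  simpa [walkRV, XiW] using
    integral_sum_mul_XiW_sq hmeas hindep hmean hξ univ b singleton_injective

theorem integral_remainder_sq_le (hmeas : ∀ i, Measurable (ξ i)) (hindep : iIndepFun ξ P)
    (hmean : ∀ i, ∫ ω, ξ i ω ∂P = 0) (hξ : ∀ i ω, ξ i ω ^ 2 = 1) (b : Fin n → ℝ) {β : ℝ}
    (hbd : ∀ i, |b i| ≤ β) (hb : ∑ i, b i ^ 2 ≤ 1) (M : ℕ) :
    ∫ ω, (((M + 1).factorial : ℝ) * ∑ C ∈ univ.filter (fun C : Finset (Fin n) => C.card = M),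
        (∏ i ∈ C, b i) * XiW ξ C ω * ∑ i ∈ C, b i ^ 2) ^ 2 ∂P
      ≤ (M + 1).factorial * (M + 1) ^ 3 * β ^ 4 := by
  set F := univ.filter (fun C : Finset (Fin n) => C.card = M)
  have hparseval : ∫ ω, (((M + 1).factorial : ℝ) * ∑ C ∈ F,
        (∏ i ∈ C, b i) * XiW ξ C ω * ∑ i ∈ C, b i ^ 2) ^ 2 ∂P
      = ((M + 1).factorial : ℝ) ^ 2 * ∑ C ∈ F, ((∏ i ∈ C, b i) * ∑ i ∈ C, b i ^ 2) ^ 2 := by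
    have hsq : ∀ ω, (((M + 1).factorial : ℝ) * ∑ C ∈ F,
          (∏ i ∈ C, b i) * XiW ξ C ω * ∑ i ∈ C, b i ^ 2) ^ 2
        = ((M + 1).factorial : ℝ) ^ 2 *
            (∑ C ∈ F, ((∏ i ∈ C, b i) * ∑ i ∈ C, b i ^ 2) * XiW ξ C ω) ^ 2 := fun ω => by
      rw [mul_pow]
      congr 2
      exact sum_congr rfl fun C _ => mul_right_comm _ _ _
    simp_rw [hsq, integral_const_mul]
    exact congrArg _ (integral_sum_mul_XiW_sq hmeas hindep hmean hξ F _ Function.injective_id)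
  have hterm : ∀ C ∈ F, ((∏ i ∈ C, b i) * ∑ i ∈ C, b i ^ 2) ^ 2
      ≤ ((M : ℝ) ^ 2 * β ^ 4) * ∏ i ∈ C, b i ^ 2 := fun C hC => by
    have hsum : ∑ i ∈ C, b i ^ 2 ≤ M * β ^ 2 := by
      calc ∑ i ∈ C, b i ^ 2 ≤ ∑ _i ∈ C, β ^ 2 :=
            sum_le_sum fun i _ => sq_le_sq' (neg_le_of_abs_le (hbd i)) (le_of_abs_le (hbd i))
        _ = M * β ^ 2 := by rw [sum_const, (mem_filter.1 hC).2, nsmul_eq_mul]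
    rw [mul_pow, ← prod_pow, mul_comm]
    calc _ ≤ (M * β ^ 2) ^ 2 * ∏ i ∈ C, b i ^ 2 := by gcongr
      _ = _ := by ring
  have hesymm : (M.factorial : ℝ) * ∑ C ∈ F, ∏ i ∈ C, b i ^ 2 ≤ 1 :=
    (factorial_mul_esymm_le_sum_pow _ (fun i => sq_nonneg (b i)) M).trans
      (pow_le_one₀ (sum_nonneg fun i _ => sq_nonneg _) hb)
  calc _ = ((M + 1).factorial : ℝ) ^ 2 * ∑ C ∈ F, ((∏ i ∈ C, b i) * ∑ i ∈ C, b i ^ 2) ^ 2 :=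
        hparseval
    _ ≤ ((M + 1).factorial : ℝ) ^ 2 * ∑ C ∈ F, ((M : ℝ) ^ 2 * β ^ 4) * ∏ i ∈ C, b i ^ 2 := by
        gcongr with C hC; exact hterm C hC
    _ = ((M + 1).factorial * (M + 1) * (M : ℝ) ^ 2 * β ^ 4) *
          (M.factorial * ∑ C ∈ F, ∏ i ∈ C, b i ^ 2) := by
        rw [← mul_sum]; push_cast [Nat.factorial_succ]; ring
    _ ≤ (M + 1).factorial * (M + 1) * (M : ℝ) ^ 2 * β ^ 4 * 1 := by gcongr
    _ ≤ (M + 1).factorial * (M + 1) ^ 3 * β ^ 4 := by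
        rw [mul_one, pow_succ' _ 2, ← mul_assoc]
        gcongr
        linarith

end Moments

theorem stmt16_general {Ω : Type*} [MeasurableSpace Ω] (P : Measure Ω)
    (H : ℝ) (hH : H ∈ Set.Ioo (1 / 2 : ℝ) 1) (n : ℕ)
    (ξ : Fin n → Ω → ℝ) (hmeas : ∀ i, Measurable (ξ i))
    (hindep : iIndepFun ξ P)
    (hdist : ∀ i, Measure.map (ξ i) P = bernPM)
    (hpm : ∀ (i : Fin n) (ω : Ω), ξ i ω = 1 ∨ ξ i ω = -1)
    (t : ℝ) (ht : t ∈ Set.Icc (0 : ℝ) 1) (b : Fin n → ℝ)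
    (hbd : ∀ i, |b i| ≤ 2 * cH H * (n : ℝ) ^ (-(1 - H)))
    (hen : ∑ i : Fin n, (b i) ^ 2 ≤ t ^ (2 * H))
    (N : ℕ) (hN : 1 ≤ N) :
    (∀ ω : Ω,
      wickPowRV ξ b (N + 1) ω
        = walkRV ξ b ω * wickPowRV ξ b N ω
          - (N : ℝ) * (∫ ω', (walkRV ξ b ω') ^ 2 ∂P) * wickPowRV ξ b (N - 1) ω
          + (N.factorial : ℝ) *
              ∑ C ∈ univ.filter (fun C : Finset (Fin n) => C.card = N - 1),
                (∏ i ∈ C, b i) * XiW ξ C ω * (∑ i ∈ C, (b i) ^ 2)) ∧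
    (∫ ω, ((N.factorial : ℝ) *
        ∑ C ∈ univ.filter (fun C : Finset (Fin n) => C.card = N - 1),
          (∏ i ∈ C, b i) * XiW ξ C ω * (∑ i ∈ C, (b i) ^ 2)) ^ 2 ∂P
      ≤ 16 * (cH H) ^ 4 * (N.factorial : ℝ) * (N : ℝ) ^ 3 * (n : ℝ) ^ (-(4 - 4 * H))) := by
  obtain ⟨M, rfl⟩ : ∃ M, N = M + 1 := ⟨N - 1, by omega⟩
  have hξ : ∀ i ω, ξ i ω ^ 2 = 1 := fun i ω => by rcases hpm i ω with h | h <;> simp [h]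
  have hmean : ∀ i, ∫ ω, ξ i ω ∂P = 0 := fun i =>
    integral_eq_zero_of_map_eq_bernPM (hmeas i) (hdist i)
  have hb : ∑ i, b i ^ 2 ≤ 1 := hen.trans (Real.rpow_le_one ht.1 ht.2 (by linarith [hH.1]))
  have hβ : (2 * cH H * (n : ℝ) ^ (-(1 - H))) ^ 4 = 16 * cH H ^ 4 * (n : ℝ) ^ (-(4 - 4 * H)) := by
    rw [mul_pow, ← Real.rpow_natCast ((n : ℝ) ^ _), ← Real.rpow_mul (Nat.cast_nonneg n)]
    ring_nf
  simp only [Nat.add_sub_cancel]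
  refine ⟨fun ω => ?_, ?_⟩
  · simp only [wickPowRV_eq_factorial_mul_homChaos, integral_walkRV_sq hmeas hindep hmean hξ]
    rw [mul_left_comm, walkRV_mul_homChaos_succ hξ]
    push_cast [Nat.factorial_succ]
    ring
  · have := integral_remainder_sq_le hmeas hindep hmean hξ b hbd hb M
    rw [hβ] at this
    push_cast
    linarith

/-- Discrete Hermite recursion: for `N ≥ 1` and `t ∈ [0,1]`,
`(B^{H,n}_t)^{⋄ₙ(N+1)} = B^{H,n}_t·(B^{H,n}_t)^{⋄ₙN} − N·E[(B^{H,n}_t)²]·(B^{H,n}_t)^{⋄ₙ(N−1)}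
  + R(B^{H,n}_t,N)` with
`R(B^{H,n}_t,N) = N! Σ_{|C|=N−1} b^n_{t,C} Ξ^n_C Σ_{i∈C}(b^n_{t,i})²` and
`E[R(B^{H,n}_t,N)²] ≤ 16 c_H⁴ N! N³ n^{−(4−4H)}`. -/
theorem stmt16 {Ω : Type*} [MeasurableSpace Ω] (P : Measure Ω) [IsProbabilityMeasure P]
    (H : ℝ) (hH : H ∈ Set.Ioo (1 / 2 : ℝ) 1) (n : ℕ) (hn : 1 ≤ n)
    (ξ : Fin n → Ω → ℝ) (hmeas : ∀ i, Measurable (ξ i))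
    (hindep : iIndepFun ξ P)
    (hdist : ∀ i, Measure.map (ξ i) P = bernPM)
    (hpm : ∀ (i : Fin n) (ω : Ω), ξ i ω = 1 ∨ ξ i ω = -1)
    (t : ℝ) (ht : t ∈ Set.Icc (0 : ℝ) 1) (b : Fin n → ℝ)
    (hbd : ∀ i, |b i| ≤ 2 * cH H * (n : ℝ) ^ (-(1 - H)))
    (hen : ∑ i : Fin n, (b i) ^ 2 ≤ t ^ (2 * H))
    (N : ℕ) (hN : 1 ≤ N) :
    (∀ ω : Ω,
      wickPowRV ξ b (N + 1) ω
        = walkRV ξ b ω * wickPowRV ξ b N ω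
          - (N : ℝ) * (∫ ω', (walkRV ξ b ω') ^ 2 ∂P) * wickPowRV ξ b (N - 1) ω
          + (N.factorial : ℝ) *
              ∑ C ∈ univ.filter (fun C : Finset (Fin n) => C.card = N - 1),
                (∏ i ∈ C, b i) * XiW ξ C ω * (∑ i ∈ C, (b i) ^ 2)) ∧
    (∫ ω, ((N.factorial : ℝ) *
        ∑ C ∈ univ.filter (fun C : Finset (Fin n) => C.card = N - 1),
          (∏ i ∈ C, b i) * XiW ξ C ω * (∑ i ∈ C, (b i) ^ 2)) ^ 2 ∂P
      ≤ 16 * (cH H) ^ 4 * (N.factorial : ℝ) * (N : ℝ) ^ 3 * (n : ℝ) ^ (-(4 - 4 * H))) :=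
  stmt16_general P H hH n ξ hmeas hindep hdist hpm t ht b hbd hen N hN
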